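/- Let ‖·‖ be a semi-norm on ℝⁿ and suppose that for each i, ‖eᵢ‖ = aᵢ for given nonnegative reals aᵢ, and that ‖∑ᵢ eᵢ‖ = ∑ᵢ aᵢ. Then for any vector v = ∑ᵢ cᵢeᵢ with all cᵢ ≥ 0 and ∑ᵢ cᵢaᵢ = 1 (where not all aᵢ are zero), we have ‖v‖ = 1. -/

import Mathlib

/-! A seminorm is subadditive and positively homogeneous, so it is at most additive on the cone
spanned by vectors `eᵢ`. If it is additive at `∑ eᵢ`, then for `t ≥ cᵢ ≥ 0` the splitting
`t • ∑ eᵢ = ∑ cᵢ • eᵢ + ∑ (t - cᵢ) • eᵢ` forces additivity at every `∑ cᵢ • eᵢ`. -/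

open Finset

namespace Seminorm

variable {E ι : Type*} [AddCommGroup E] [Module ℝ E]

lemma map_smul_of_nonneg (p : Seminorm ℝ E) {t : ℝ} (ht : 0 ≤ t) (x : E) :
    p (t • x) = t * p x := by
  rw [map_smul_eq_mul, Real.norm_of_nonneg ht]

lemma map_sum_smul_le (p : Seminorm ℝ E) (s : Finset ι) (e : ι → E) {c : ι → ℝ}
    (hc : ∀ i ∈ s, 0 ≤ c i) : p (∑ i ∈ s, c i • e i) ≤ ∑ i ∈ s, c i * p (e i) :=
  calc p (∑ i ∈ s, c i • e i) ≤ ∑ i ∈ s, p (c i • e i) :=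
        le_sum_of_subadditive p (map_zero p).le (map_add_le_add p) s _
    _ = ∑ i ∈ s, c i * p (e i) :=
        sum_congr rfl fun i hi ↦ p.map_smul_of_nonneg (hc i hi) (e i)

lemma map_sum_smul_of_map_sum_eq (p : Seminorm ℝ E) (s : Finset ι) (e : ι → E)
    (hadd : p (∑ i ∈ s, e i) = ∑ i ∈ s, p (e i)) {c : ι → ℝ} (hc : ∀ i ∈ s, 0 ≤ c i) :
    p (∑ i ∈ s, c i • e i) = ∑ i ∈ s, c i * p (e i) := by
  refine le_antisymm (p.map_sum_smul_le s e hc) ?_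
  set t := ∑ i ∈ s, c i
  have ht : 0 ≤ t := sum_nonneg hc
  have hct : ∀ i ∈ s, 0 ≤ t - c i := fun i hi ↦ sub_nonneg.2 (single_le_sum hc hi)
  have hsplit : t • ∑ i ∈ s, e i = ∑ i ∈ s, c i • e i + ∑ i ∈ s, (t - c i) • e i := by
    rw [smul_sum, ← sum_add_distrib]
    exact sum_congr rfl fun i _ ↦ by rw [← add_smul, add_sub_cancel]
  have key : t * ∑ i ∈ s, p (e i) ≤
      p (∑ i ∈ s, c i • e i) + ∑ i ∈ s, (t - c i) * p (e i) :=
    calc t * ∑ i ∈ s, p (e i) = p (t • ∑ i ∈ s, e i) := by rw [p.map_smul_of_nonneg ht, hadd]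
      _ ≤ p (∑ i ∈ s, c i • e i) + p (∑ i ∈ s, (t - c i) • e i) := hsplit ▸ map_add_le_add p _ _
      _ ≤ p (∑ i ∈ s, c i • e i) + ∑ i ∈ s, (t - c i) * p (e i) :=
          add_le_add_right (p.map_sum_smul_le s e hct) _
  simp only [sub_mul, sum_sub_distrib, ← mul_sum] at key
  linarith

end Seminorm

theorem seminorm_eq_one_on_affine_slice_general (n : ℕ) (p : Seminorm ℝ (Fin n → ℝ))
    (a : Fin n → ℝ)
    (hpe : ∀ i, p (Pi.single i (1 : ℝ)) = a i)
    (hsum : p (∑ i, Pi.single i (1 : ℝ)) = ∑ i, a i)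
    (c : Fin n → ℝ) (hc : ∀ i, 0 ≤ c i) (hone : ∑ i, c i * a i = 1) :
    p (∑ i, c i • (Pi.single i (1 : ℝ) : Fin n → ℝ)) = 1 := by
  have hadd : p (∑ i, Pi.single i (1 : ℝ)) = ∑ i, p (Pi.single i (1 : ℝ)) := by
    simp only [hpe, hsum]
  rw [p.map_sum_smul_of_map_sum_eq _ _ hadd fun i _ ↦ hc i]
  simpa only [hpe] using hone

/-- If a semi-norm takes values `aᵢ` on the standard basis vectors and is additive at
the all-ones point, then every nonnegative vector on the affine hyperplane
`∑ cᵢ aᵢ = 1` has norm exactly `1`. -/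
theorem seminorm_eq_one_on_affine_slice (n : ℕ) (p : Seminorm ℝ (Fin n → ℝ))
    (a : Fin n → ℝ) (ha : ∀ i, 0 ≤ a i)
    (hpe : ∀ i, p (Pi.single i (1 : ℝ)) = a i)
    (hsum : p (∑ i, Pi.single i (1 : ℝ)) = ∑ i, a i)
    (hne : ∃ i, a i ≠ 0)
    (c : Fin n → ℝ) (hc : ∀ i, 0 ≤ c i) (hone : ∑ i, c i * a i = 1) :
    p (∑ i, c i • (Pi.single i (1 : ℝ) : Fin n → ℝ)) = 1 :=
  seminorm_eq_one_on_affine_slice_general n p a hpe hsum c hc hone
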